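/- arXiv:math/0305437 — 4 statements merged into one kernel-verified Lean document; each statement's English description precedes it below -/
import Mathlib

section
/- On ℂ[x₀,...,x_{n−1}], define derivations e_i = ∂_{x_i}, h_i = −2 Σ_{j=0}^{n−i−1} x_j ∂_{x_{i+j}}, and f_i = −Σ_{j=0}^{n−1−i} (Σ_{a+b=j} x_a x_b) ∂_{x_{i+j}} for 0 ≤ i ≤ n−1 (indices of derivations beyond n−1 set to 0). Then these satisfy the relations of sl₂ ⊗ ℂ[t]/tⁿ: [e_i, f_j] = h_{i+j}, [h_i, e_j] = 2 e_{i+j}, [h_i, f_j] = −2 f_{i+j}, where x_{i+j} terms with i+j ≥ n are interpreted as zero. -/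
open Finset

/-- `∂/∂xₖ` on ℂ[x₀,…,x_{n−1}], zero for `k ≥ n` (this is `e_k`). -/
noncomputable def pd (n k : ℕ) :
    Derivation ℂ (MvPolynomial (Fin n) ℂ) (MvPolynomial (Fin n) ℂ) :=
  if h : k < n then MvPolynomial.pderiv ⟨k, h⟩ else 0

/-- The variable `xₖ`, zero if `k ≥ n`. -/
noncomputable def Xv (n k : ℕ) : MvPolynomial (Fin n) ℂ :=
  if h : k < n then MvPolynomial.X ⟨k, h⟩ else 0

/-- `h_i = −2 Σ_{j=0}^{n−i−1} x_j ∂_{x_{i+j}}`. -/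
noncomputable def hx (n i : ℕ) :
    Derivation ℂ (MvPolynomial (Fin n) ℂ) (MvPolynomial (Fin n) ℂ) :=
  (-2 : ℂ) • ∑ j ∈ Finset.range (n - i), Xv n j • pd n (i + j)

/-- `f_i = −Σ_{j=0}^{n−1−i} (Σ_{a+b=j} x_a x_b) ∂_{x_{i+j}}`. -/
noncomputable def fx (n i : ℕ) :
    Derivation ℂ (MvPolynomial (Fin n) ℂ) (MvPolynomial (Fin n) ℂ) :=
  - ∑ j ∈ Finset.range (n - i),
      (∑ p ∈ Finset.range (j + 1), Xv n p * Xv n (j - p)) • pd n (i + j)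


open MvPolynomial

lemma Dsum_apply {ι : Type*} {n : ℕ} (s : Finset ι)
    (D : ι → Derivation ℂ (MvPolynomial (Fin n) ℂ) (MvPolynomial (Fin n) ℂ))
    (a : MvPolynomial (Fin n) ℂ) :
    (∑ j ∈ s, D j) a = ∑ j ∈ s, D j a := by
  have := map_sum (Derivation.coeFnAddMonoidHom (R := ℂ)) D s
  exact (congrFun this a).trans (by rw [Finset.sum_apply]; exact Finset.sum_congr rfl fun j _ => rfl)

lemma pd_X {n : ℕ} (k : ℕ) (m : Fin n) :
    pd n k (MvPolynomial.X m) = if (m : ℕ) = k then 1 else 0 := by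
  unfold pd
  split
  · rename_i h
    rw [pderiv_X]
    rcases eq_or_ne ((m:ℕ)) k with hk | hk
    · have : (⟨k, h⟩ : Fin n) = m := by ext; simp [hk]
      subst this; simp [hk]
    · have : (⟨k, h⟩ : Fin n) ≠ m := by simp [Fin.ext_iff]; omega
      simp [Pi.single_eq_of_ne' this, hk]
  · rename_i h
    have : (m : ℕ) ≠ k := by omega
    simp [this]

noncomputable def Sq (n m : ℕ) : MvPolynomial (Fin n) ℂ :=
  ∑ p ∈ Finset.range (m + 1), Xv n p * Xv n (m - p)

lemma Xv_lt {n a : ℕ} (h : a < n) : Xv n a = MvPolynomial.X ⟨a, h⟩ := dif_pos h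

lemma pd_Xv (n k a : ℕ) : pd n k (Xv n a) = if a = k ∧ a < n then 1 else 0 := by
  by_cases h : a < n
  · rw [Xv_lt h, pd_X]
    rcases eq_or_ne a k with h' | h'
    · subst h'; simp [h]
    · simp [h']
  · have : Xv n a = 0 := dif_neg h
    rw [this, map_zero, if_neg (by omega)]

/-- generic "pick one index" lemma -/
lemma sum_pick {M : Type*} [AddCommMonoid M] (N i m : ℕ) (f : ℕ → M) :
    ∑ j ∈ Finset.range N, (if m = i + j then f j else 0) =
      if i ≤ m ∧ m - i < N then f (m - i) else 0 := by
  by_cases h : i ≤ m ∧ m - i < N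
  · rw [if_pos h, Finset.sum_eq_single (m - i)]
    · rw [if_pos (by omega)]
    · intro b _ hb; rw [if_neg (by omega)]
    · intro hmem; exact absurd (Finset.mem_range.2 h.2) hmem
  · rw [if_neg h, Finset.sum_eq_zero]
    intro b hb
    simp only [Finset.mem_range] at hb
    rw [if_neg (by omega)]

lemma sum_trunc {M : Type*} [AddCommMonoid M] (m i : ℕ) (f : ℕ → M) :
    ∑ p ∈ Finset.range (m + 1), (if i ≤ m - p then f p else 0) =
      if i ≤ m then ∑ p ∈ Finset.range (m - i + 1), f p else 0 := by
  by_cases h : i ≤ m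
  · rw [if_pos h, ← Finset.sum_subset (s₁ := Finset.range (m - i + 1))
      (by intro x hx; simp only [Finset.mem_range] at *; omega)
      (by intro x hx hx'; simp only [Finset.mem_range] at *; rw [if_neg (by omega)])]
    refine Finset.sum_congr rfl fun p hp => ?_
    simp only [Finset.mem_range] at hp
    rw [if_pos (by omega)]
  · rw [if_neg h, Finset.sum_eq_zero]
    intro p hp; simp only [Finset.mem_range] at hp
    rw [if_neg (by omega)]

lemma hx_X {n : ℕ} (i : ℕ) (m : Fin n) :
    hx n i (MvPolynomial.X m) =
      if i ≤ (m : ℕ) then (-2 : ℂ) • Xv n ((m : ℕ) - i) else 0 := by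
  unfold hx
  rw [Derivation.smul_apply, Dsum_apply]
  rw [Finset.sum_congr rfl (fun j _ => ?_), sum_pick (n - i) i (m : ℕ) (fun j => Xv n j)]
  · have hm := m.isLt
    by_cases h : i ≤ (m : ℕ)
    · rw [if_pos (by omega), if_pos h]
    · rw [if_neg (by omega), if_neg h, smul_zero]
  · rw [Derivation.smul_apply, pd_X]
    by_cases h : (m : ℕ) = i + j <;> simp [h]

lemma fx_X {n : ℕ} (i : ℕ) (m : Fin n) :
    fx n i (MvPolynomial.X m) =
      if i ≤ (m : ℕ) then -(Sq n ((m : ℕ) - i)) else 0 := by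
  unfold fx
  rw [Derivation.neg_apply, Dsum_apply]
  rw [Finset.sum_congr rfl (fun j _ => ?_), sum_pick (n - i) i (m : ℕ) (fun j => Sq n j)]
  · have hm := m.isLt
    by_cases h : i ≤ (m : ℕ)
    · rw [if_pos (by omega), if_pos h]
    · rw [if_neg (by omega), if_neg h, neg_zero]
  · rw [Derivation.smul_apply, pd_X]
    by_cases h : (m : ℕ) = i + j <;> simp [h, Sq]

lemma hx_Xv {n i a : ℕ} (h : a < n) :
    hx n i (Xv n a) = if i ≤ a then (-2 : ℂ) • Xv n (a - i) else 0 := by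
  rw [Xv_lt h, hx_X]

lemma fx_Xv {n i a : ℕ} (h : a < n) :
    fx n i (Xv n a) = if i ≤ a then -(Sq n (a - i)) else 0 := by
  rw [Xv_lt h, fx_X]

lemma pd_Sq {n m k : ℕ} (hm : m < n) (hk : k < n) :
    pd n k (Sq n m) = if k ≤ m then (2 : ℂ) • Xv n (m - k) else 0 := by
  have key : ∀ p ∈ Finset.range (m + 1), pd n k (Xv n p * Xv n (m - p)) =
      (if m - p = k then Xv n p else 0) + (if p = k then Xv n (m - p) else 0) := by
    intro p hp
    simp only [Finset.mem_range] at hp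
    rw [Derivation.leibniz, pd_Xv, pd_Xv,
      if_congr (and_iff_left (show m - p < n by omega)) rfl rfl,
      if_congr (and_iff_left (show p < n by omega)) rfl rfl]
    by_cases c1 : m - p = k <;> by_cases c2 : p = k <;> simp [c1, c2]
  unfold Sq
  rw [map_sum, Finset.sum_congr rfl key, Finset.sum_add_distrib]
  have A : (∑ p ∈ Finset.range (m + 1), if m - p = k then Xv n p else 0) =
      if k ≤ m then Xv n (m - k) else 0 := by
    by_cases h : k ≤ m
    · rw [if_pos h, Finset.sum_eq_single (m - k)]
      · rw [if_pos (by omega)]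
      · intro b hb hb'; simp only [Finset.mem_range] at hb; rw [if_neg (by omega)]
      · intro hmem; exact absurd (Finset.mem_range.2 (by omega)) hmem
    · rw [if_neg h, Finset.sum_eq_zero]
      intro b hb; simp only [Finset.mem_range] at hb; rw [if_neg (by omega)]
  have B : (∑ p ∈ Finset.range (m + 1), if p = k then Xv n (m - p) else 0) =
      if k ≤ m then Xv n (m - k) else 0 := by
    rw [Finset.sum_ite_eq' (Finset.range (m + 1)) k (fun p => Xv n (m - p))]
    by_cases h : k ≤ m <;> simp [Finset.mem_range, Nat.lt_succ, h]
  rw [A, B]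
  by_cases h : k ≤ m
  · simp [h, two_smul]
  · simp [h]

lemma hx_Sq {n m i : ℕ} (hm : m < n) :
    hx n i (Sq n m) = if i ≤ m then (-4 : ℂ) • Sq n (m - i) else 0 := by
  have hs : ∀ a b : MvPolynomial (Fin n) ℂ, a • ((-2 : ℂ) • b) = (-2 : ℂ) • (a * b) :=
    fun a b => by rw [smul_comm, smul_eq_mul]
  have key : ∀ p ∈ Finset.range (m + 1), hx n i (Xv n p * Xv n (m - p)) =
      (if i ≤ m - p then (-2 : ℂ) • (Xv n p * Xv n (m - p - i)) else 0) +
      (if i ≤ p then (-2 : ℂ) • (Xv n (m - p) * Xv n (p - i)) else 0) := by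
    intro p hp
    simp only [Finset.mem_range] at hp
    rw [Derivation.leibniz, hx_Xv (show m - p < n by omega), hx_Xv (show p < n by omega)]
    by_cases h1 : i ≤ m - p <;> by_cases h2 : i ≤ p <;> simp [h1, h2, hs]
  have refl2 : (∑ p ∈ Finset.range (m + 1),
        if i ≤ p then (-2 : ℂ) • (Xv n (m - p) * Xv n (p - i)) else 0) =
      ∑ p ∈ Finset.range (m + 1),
        (if i ≤ m - p then (-2 : ℂ) • (Xv n p * Xv n (m - p - i)) else 0) := by
    rw [← Finset.sum_range_reflect
      (fun p => if i ≤ m - p then (-2 : ℂ) • (Xv n p * Xv n (m - p - i)) else 0) (m + 1)]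
    refine Finset.sum_congr rfl fun p hp => ?_
    simp only [Finset.mem_range] at hp
    have e : m + 1 - 1 - p = m - p := by omega
    have e2 : m - (m - p) = p := by omega
    rw [e, e2]
  unfold Sq
  rw [map_sum, Finset.sum_congr rfl key, Finset.sum_add_distrib, refl2, ← two_smul ℂ,
    sum_trunc m i (fun p => (-2 : ℂ) • (Xv n p * Xv n (m - p - i)))]
  by_cases h : i ≤ m
  · rw [if_pos h, if_pos h, ← Finset.smul_sum, smul_smul]
    norm_num
    congr 1
    exact funext fun p => by rw [Nat.sub_right_comm]
  · rw [if_neg h, if_neg h, smul_zero]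

/-- The fields `e_i, h_i, f_i` satisfy the relations of `sl₂ ⊗ ℂ[t]/tⁿ`:
`[eᵢ,fⱼ] = h_{i+j}`, `[hᵢ,eⱼ] = 2e_{i+j}`, `[hᵢ,fⱼ] = −2f_{i+j}`. -/
theorem sl2_current_relations (n i j : ℕ) (hi : i ≤ n - 1) (hj : j ≤ n - 1) :
    ⁅pd n i, fx n j⁆ = hx n (i + j) ∧
    ⁅hx n i, pd n j⁆ = (2 : ℂ) • pd n (i + j) ∧
    ⁅hx n i, fx n j⁆ = (-2 : ℂ) • fx n (i + j) := by
  refine ⟨?_, ?_, ?_⟩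
  · apply MvPolynomial.derivation_ext
    intro m
    have hn : 0 < n := m.pos
    have hmn := m.isLt
    have hin : i < n := by omega
    rw [Derivation.commutator_apply, fx_X, pd_X, hx_X]
    have z : fx n j (if (m : ℕ) = i then (1 : MvPolynomial (Fin n) ℂ) else 0) = 0 := by
      split <;> simp
    rw [z, sub_zero]
    by_cases h1 : j ≤ (m : ℕ)
    · rw [if_pos h1, map_neg, pd_Sq (by omega) hin]
      by_cases h2 : i + j ≤ (m : ℕ)
      · rw [if_pos (by omega : i ≤ (m : ℕ) - j), if_pos h2,
          show (m : ℕ) - j - i = (m : ℕ) - (i + j) from by omega]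
        module
      · rw [if_neg (by omega : ¬ i ≤ (m : ℕ) - j), if_neg h2, neg_zero]
    · rw [if_neg h1, if_neg (by omega), map_zero]
  · apply MvPolynomial.derivation_ext
    intro m
    have hn : 0 < n := m.pos
    have hmn := m.isLt
    rw [Derivation.commutator_apply, pd_X, hx_X]
    have z : hx n i (if (m : ℕ) = j then (1 : MvPolynomial (Fin n) ℂ) else 0) = 0 := by
      split <;> simp
    rw [z, zero_sub, Derivation.smul_apply, pd_X]
    by_cases h1 : i ≤ (m : ℕ)
    · rw [if_pos h1, Derivation.map_smul, pd_Xv]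
      by_cases h2 : (m : ℕ) = i + j
      · rw [if_pos (by omega : (m : ℕ) - i = j ∧ (m : ℕ) - i < n), if_pos h2]
        module
      · rw [if_neg (by omega), if_neg h2]
        simp
    · rw [if_neg h1, map_zero, if_neg (by omega : ¬ (m : ℕ) = i + j)]
      simp
  · apply MvPolynomial.derivation_ext
    intro m
    have hn : 0 < n := m.pos
    have hmn := m.isLt
    rw [Derivation.commutator_apply, fx_X, hx_X, Derivation.smul_apply, fx_X]
    by_cases h2 : i + j ≤ (m : ℕ)
    · rw [if_pos (by omega : j ≤ (m : ℕ)), if_pos (by omega : i ≤ (m : ℕ)),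
        if_pos h2, map_neg, hx_Sq (by omega), if_pos (by omega : i ≤ (m : ℕ) - j),
        Derivation.map_smul, fx_Xv (by omega : (m : ℕ) - i < n), if_pos (by omega : j ≤ (m : ℕ) - i),
        show (m : ℕ) - j - i = (m : ℕ) - (i + j) from by omega,
        show (m : ℕ) - i - j = (m : ℕ) - (i + j) from by omega]
      module
    · rw [if_neg h2, smul_zero]
      have t1 : hx n i (if j ≤ (m : ℕ) then -(Sq n ((m : ℕ) - j)) else 0) = 0 := by
        split
        · rw [map_neg, hx_Sq (by omega), if_neg (by omega), neg_zero]
        · exact map_zero _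
      have t2 : fx n j (if i ≤ (m : ℕ) then (-2 : ℂ) • Xv n ((m : ℕ) - i) else 0) = 0 := by
        split
        · rw [Derivation.map_smul, fx_Xv (by omega), if_neg (by omega), smul_zero]
        · exact map_zero _
      rw [t1, t2, sub_zero]
end

section
/- Let x(t), y(t) ∈ ℂ[t]/(tⁿ) with x(t)y(t) = 1, writing x(t) = Σ xᵢtⁱ, y(t) = Σ yᵢtⁱ. Then under the change of coordinates (y₀,...,y_{n−1}) ↦ (x₀,...,x_{n−1}) determined by inversion in ℂ[t]/(tⁿ), the pullback of the n-form dy₀∧dy₁∧...∧dy_{n−1} equals ((−1)ⁿ / x₀^{2n}) dx₀∧...∧dx_{n−1}. -/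
open Polynomial

/-! Multiplication by `a` in `ℂ[t]/(tⁿ)` is lower triangular in the monomial basis with diagonal
`a₀`, so its determinant is `a₀ⁿ`. Near a point with `x₀ ≠ 0`, multiplication by `z` is therefore
invertible and `ι z = (z ·)⁻¹ 1`, so `ι` is differentiable; differentiating `x · ι(x) = 1` gives
`x · dι(v) = -ι(x) · v`. Taking determinants, `x₀ⁿ · det dι = (-1)ⁿ · ι(x)₀ⁿ = (-1)ⁿ · x₀⁻ⁿ`. -/

open Filter Topology

noncomputable section

section ImplicitLinear

variable {𝕜 E F G : Type*} [NontriviallyNormedField 𝕜]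
  [NormedAddCommGroup E] [NormedSpace 𝕜 E] [NormedAddCommGroup F] [NormedSpace 𝕜 F]
  [NormedAddCommGroup G] [NormedSpace 𝕜 G]

theorem differentiableAt_of_eventually_apply_eq [CompleteSpace F] (B : E →L[𝕜] F →L[𝕜] F)
    {f : E → F} {c : F} {x : E} (hB : IsUnit (B x)) (hf : ∀ᶠ z in 𝓝 x, B z (f z) = c) :
    DifferentiableAt 𝕜 f x := by
  have hunit : ∀ᶠ z in 𝓝 x, IsUnit (B z) :=
    B.continuous.continuousAt.preimage_mem_nhds (Units.isOpen.mem_nhds hB)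
  have hsolve : (fun z => Ring.inverse (B z) c) =ᶠ[𝓝 x] f := by
    filter_upwards [hunit, hf] with z hz hfz
    rw [← hfz]
    exact congr($(Ring.inverse_mul_cancel _ hz) (f z))
  exact (((differentiableAt_inverse hB).comp x B.differentiableAt).clm_apply
    (differentiableAt_const c)).congr_of_eventuallyEq hsolve.symm

theorem comp_fderiv_eq_neg_flip (B : E →L[𝕜] F →L[𝕜] G) {f : E → F} {c : G} {x : E}
    (hfx : DifferentiableAt 𝕜 f x) (hf : ∀ᶠ z in 𝓝 x, B z (f z) = c) :
    (B x).comp (fderiv 𝕜 f x) = -B.flip (f x) := by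
  have hderiv := B.hasFDerivAt_of_bilinear (hasFDerivAt_id x) hfx.hasFDerivAt
  have hconst : HasFDerivAt (fun z => B z (f z)) (0 : E →L[𝕜] G) x :=
    (hasFDerivAt_const c x).congr_of_eventuallyEq hf
  ext v
  have := congr($(hderiv.unique hconst) v)
  simpa [eq_neg_iff_add_eq_zero] using this

theorem det_mul_det_fderiv_of_eventually_apply_eq (B : E →L[𝕜] E →L[𝕜] E)
    (hB : ∀ a b, B a b = B b a) {f : E → E} {c : E} {x : E}
    (hfx : DifferentiableAt 𝕜 f x) (hf : ∀ᶠ z in 𝓝 x, B z (f z) = c) :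
    (B x).det * (fderiv 𝕜 f x).det = (-1) ^ Module.finrank 𝕜 E * (B (f x)).det := by
  have hflip : B.flip (f x) = B (f x) := by ext v; exact hB _ _
  rw [ContinuousLinearMap.det, ContinuousLinearMap.det, ← LinearMap.det_comp,
    ← ContinuousLinearMap.toLinearMap_comp, comp_fderiv_eq_neg_flip B hfx hf, hflip,
    ContinuousLinearMap.toLinearMap_neg, ← neg_one_smul 𝕜, LinearMap.det_smul]

end ImplicitLinear

section TruncatedMul

variable {R : Type*} [CommRing R] {n : ℕ}

def coeffsToPoly : (Fin n → R) →ₗ[R] R[X] where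
  toFun x := ∑ i, C (x i) * X ^ (i : ℕ)
  map_add' x y := by simp [add_mul, Finset.sum_add_distrib]
  map_smul' c x := by simp [Finset.mul_sum, smul_eq_C_mul, mul_assoc]

theorem coeff_coeffsToPoly (x : Fin n → R) (m : ℕ) :
    (coeffsToPoly x).coeff m = if h : m < n then x ⟨m, h⟩ else 0 := by
  simp only [coeffsToPoly, LinearMap.coe_mk, AddHom.coe_mk, finsetSum_coeff, coeff_C_mul_X_pow]
  split_ifs with h
  · rw [Finset.sum_eq_single ⟨m, h⟩] <;> aesop
  · exact Finset.sum_eq_zero fun i _ => if_neg (by omega)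

theorem coeffsToPoly_single [DecidableEq (Fin n)] (j : Fin n) :
    coeffsToPoly (Pi.single j 1 : Fin n → R) = X ^ (j : ℕ) := by
  simp [coeffsToPoly, Pi.single_apply]

def truncMul : (Fin n → R) →ₗ[R] (Fin n → R) →ₗ[R] Fin n → R :=
  ((LinearMap.mul R R[X]).compl₁₂ coeffsToPoly coeffsToPoly).compr₂
    (LinearMap.pi fun k => lcoeff R k)

theorem truncMul_apply (a b : Fin n → R) (k : Fin n) :
    truncMul a b k = (coeffsToPoly a * coeffsToPoly b).coeff k := rfl

theorem truncMul_comm (a b : Fin n → R) : truncMul a b = truncMul b a := by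
  ext k; simp [truncMul_apply, mul_comm]

theorem det_truncMul (a : Fin n → R) :
    LinearMap.det (truncMul a) = (coeffsToPoly a).coeff 0 ^ n := by
  classical
  have hentry : ∀ i j : Fin n, LinearMap.toMatrix' (truncMul a) i j =
      if (j : ℕ) ≤ i then (coeffsToPoly a).coeff (i - j) else 0 := by
    intro i j
    rw [LinearMap.toMatrix'_apply, truncMul_apply, coeffsToPoly_single, coeff_mul_X_pow']
  rw [← LinearMap.det_toMatrix', Matrix.det_of_isLowerTriangular]
  · simp [hentry]
  · intro i j hij
    rw [hentry, if_neg (not_le.2 (Fin.lt_def.1 (OrderDual.toDual_lt_toDual.1 hij)))]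

theorem truncMul_eq_of_mk_eq_one {x y : Fin n → R}
    (h : Ideal.Quotient.mk (Ideal.span {X ^ n}) (coeffsToPoly x * coeffsToPoly y) = 1) :
    truncMul x y = fun k : Fin n => (1 : R[X]).coeff k := by
  rw [← map_one (Ideal.Quotient.mk _), Ideal.Quotient.eq, Ideal.mem_span_singleton,
    X_pow_dvd_iff] at h
  funext k
  exact sub_eq_zero.1 ((coeff_sub ..).symm.trans (h k k.isLt))

end TruncatedMul

section

variable {𝕜 : Type*} [NontriviallyNormedField 𝕜] [CompleteSpace 𝕜] {n : ℕ}

def truncMulCLM : (Fin n → 𝕜) →L[𝕜] (Fin n → 𝕜) →L[𝕜] Fin n → 𝕜 :=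
  LinearMap.toContinuousLinearMap (LinearMap.toContinuousLinearMap.toLinearMap ∘ₗ truncMul)

theorem truncMulCLM_apply (a b : Fin n → 𝕜) :
    (truncMulCLM : (Fin n → 𝕜) →L[𝕜] _) a b = truncMul a b :=
  rfl

end

end

/-- Inversion in ℂ[t]/(tⁿ): if `ι` sends the coefficient tuple of `x(t)` to that of its
inverse `y(t)` (i.e. `x(t)·y(t) = 1` in ℂ[t]/(tⁿ)), then the Jacobian determinant of `ι`
(i.e. the factor in the pullback of `dy₀∧…∧dy_{n−1}` against `dx₀∧…∧dx_{n−1}`)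
equals `(−1)ⁿ / x₀^{2n}`. -/
theorem jacobian_of_inversion_form (n : ℕ) (hn : 0 < n)
    (ι : (Fin n → ℂ) → (Fin n → ℂ))
    (hinv : ∀ x : Fin n → ℂ, x ⟨0, hn⟩ ≠ 0 →
      (Ideal.Quotient.mk (Ideal.span {(X : Polynomial ℂ) ^ n}))
        ((∑ i : Fin n, C (x i) * X ^ (i : ℕ)) *
          (∑ i : Fin n, C (ι x i) * X ^ (i : ℕ))) = 1)
    (x : Fin n → ℂ) (hx : x ⟨0, hn⟩ ≠ 0) :
    LinearMap.det (fderiv ℂ ι x).toLinearMap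
      = (-1) ^ n * (x ⟨0, hn⟩)⁻¹ ^ (2 * n) := by
  let M : (Fin n → ℂ) →L[ℂ] (Fin n → ℂ) →L[ℂ] Fin n → ℂ := truncMulCLM
  have hdetM (a : Fin n → ℂ) : (M a).det = a ⟨0, hn⟩ ^ n := by
    simp [M, ContinuousLinearMap.det, truncMulCLM, det_truncMul, coeff_coeffsToPoly, hn]
  have hrel : ∀ᶠ z in 𝓝 x, M z (ι z) = fun k : Fin n => (1 : ℂ[X]).coeff k :=
    ((continuous_apply _).continuousAt.eventually_ne hx).mono fun z hz =>
      truncMul_eq_of_mk_eq_one (hinv z hz)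
  have hunit : IsUnit (M x) := by
    rw [ContinuousLinearMap.isUnit_iff_isUnit_toLinearMap, LinearMap.isUnit_iff_isUnit_det]
    exact (hdetM x ▸ pow_ne_zero n hx).isUnit
  have hy0 : ι x ⟨0, hn⟩ = (x ⟨0, hn⟩)⁻¹ := by
    refine eq_inv_of_mul_eq_one_right ?_
    simpa [M, truncMulCLM_apply, truncMul_apply, coeff_coeffsToPoly, hn] using
      congrFun hrel.self_of_nhds ⟨0, hn⟩
  have hdet := det_mul_det_fderiv_of_eventually_apply_eq M (fun a b => truncMul_comm a b)
    (differentiableAt_of_eventually_apply_eq M hunit hrel) hrel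
  rw [hdetM, hdetM, hy0, Module.finrank_fin_fun, ContinuousLinearMap.det] at hdet
  apply mul_left_cancel₀ (pow_ne_zero n hx)
  rw [hdet, pow_mul', inv_pow]
  field_simp
end

section
/- Let d(a₁,...,aₙ) for nonnegative integers satisfy: (i) d of the all-zero tuple is 1; (ii) d(a₁,...,aₙ) ≤ d(a₁,...,a_{n−1}, aₙ−1) + ∏_{i=1}^{n−1}(aᵢ+1) whenever aₙ ≥ 1; (iii) d is invariant under swapping adjacent entries aᵢ, aᵢ₊₁ when aᵢ = aᵢ₊₁ + 1; and suppose these hold for all smaller n with d(a₁,...,a_{n−1}) ≤ ∏_{i=1}^{n−1}(aᵢ+1) for nondecreasing tuples. Then for any nondecreasing tuple 0 ≤ a₁ ≤ ... ≤ aₙ, d(a₁,...,aₙ) ≤ ∏_{i=1}^{n}(aᵢ+1). -/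
lemma sdb_decomp : ∀ (l : List ℕ) (b : ℕ), l.Pairwise (· ≤ ·) → (∀ x ∈ l, x ≤ b + 1) →
    ∃ l₁ k, l = l₁ ++ List.replicate k (b + 1) ∧ (∀ x ∈ l₁, x ≤ b) ∧ l₁.Pairwise (· ≤ ·) := by
  intro l
  induction l with
  | nil => exact fun b _ _ => ⟨[], 0, rfl, by simp, by simp⟩
  | cons x t ih =>
    intro b hs hb
    rcases Nat.lt_or_ge x (b + 1) with hx | hx
    · obtain ⟨l₁, k, ht, hle, hsort⟩ := ih b hs.of_cons
        (fun y hy => hb y (List.mem_cons_of_mem _ hy))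
      refine ⟨x :: l₁, k, by simp [ht], ?_, ?_⟩
      · intro y hy
        rcases List.mem_cons.mp hy with rfl | hy
        · omega
        · exact hle y hy
      · rw [List.pairwise_cons]
        refine ⟨fun y hy => ?_, hsort⟩
        exact (List.pairwise_cons.mp hs).1 y (by rw [ht]; exact List.mem_append_left _ hy)
    · have hx' : x = b + 1 := le_antisymm (hb x (by simp)) hx
      have hall : ∀ y ∈ t, y = b + 1 := fun y hy =>
        le_antisymm (hb y (by simp [hy])) (hx' ▸ (List.pairwise_cons.mp hs).1 y hy)
      refine ⟨[], t.length + 1, ?_, by simp, by simp⟩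
      rw [List.nil_append, List.replicate_succ, hx']
      exact congrArg _ (List.eq_replicate_of_mem hall)

lemma sdb_rep (b : ℕ) : ∀ k, List.Pairwise (fun x y : ℕ => x ≤ y) (List.replicate k b) := by
  intro k
  induction k with
  | zero => simp
  | succ k ih =>
    rw [List.replicate_succ, List.pairwise_cons]
    exact ⟨fun y hy => le_of_eq (List.eq_of_mem_replicate hy).symm, ih⟩

lemma sdb_swapmany (d : List ℕ → ℕ)
    (hswap : ∀ (l₁ l₂ : List ℕ) (a : ℕ),
      d (l₁ ++ (a + 1) :: a :: l₂) = d (l₁ ++ a :: (a + 1) :: l₂)) :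
    ∀ (k : ℕ) (l₁ : List ℕ) (b : ℕ) (l₂ : List ℕ),
      d (l₁ ++ List.replicate k (b + 1) ++ b :: l₂) =
      d (l₁ ++ b :: List.replicate k (b + 1) ++ l₂) := by
  intro k
  induction k with
  | zero => simp
  | succ k ih =>
    intro l₁ b l₂
    have h1 : l₁ ++ List.replicate (k+1) (b+1) ++ b :: l₂ =
        (l₁ ++ [b+1]) ++ List.replicate k (b+1) ++ b :: l₂ := by
      simp [List.replicate_succ]
    have h2 : (l₁ ++ [b+1]) ++ b :: List.replicate k (b+1) ++ l₂ =
        l₁ ++ (b+1) :: b :: (List.replicate k (b+1) ++ l₂) := by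
      simp
    have h3 : l₁ ++ b :: (b+1) :: (List.replicate k (b+1) ++ l₂) =
        l₁ ++ b :: List.replicate (k+1) (b+1) ++ l₂ := by
      simp [List.replicate_succ]
    rw [h1, ih, h2, hswap, h3]

/-- If `d` on tuples (lists) of naturals satisfies: (i) `d = 1` on all-zero tuples;
(ii) `d(a₁,…,aₙ) ≤ d(a₁,…,a_{n−1},aₙ−1) + ∏_{i<n}(aᵢ+1)` when `aₙ ≥ 1`;
(iii) `d` is invariant under swapping adjacent entries `a+1, a`;
then `d(a₁,…,aₙ) ≤ ∏ᵢ(aᵢ+1)` for every nondecreasing tuple. -/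
theorem section_dim_bound (d : List ℕ → ℕ)
    (h0 : ∀ l : List ℕ, (∀ a ∈ l, a = 0) → d l = 1)
    (hrec : ∀ (l : List ℕ) (a : ℕ),
      d (l ++ [a + 1]) ≤ d (l ++ [a]) + (l.map (· + 1)).prod)
    (hswap : ∀ (l₁ l₂ : List ℕ) (a : ℕ),
      d (l₁ ++ (a + 1) :: a :: l₂) = d (l₁ ++ a :: (a + 1) :: l₂))
    (l : List ℕ) (hl : l.Pairwise (· ≤ ·)) :
    d l ≤ (l.map (· + 1)).prod := by
  suffices H : ∀ (n : ℕ) (l : List ℕ), l.sum ≤ n → l.Pairwise (· ≤ ·) →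
      d l ≤ (l.map (· + 1)).prod from H l.sum l le_rfl hl
  intro n
  induction n with
  | zero =>
    intro l hsum _
    have hz : ∀ a ∈ l, a = 0 := fun a ha => by
      have := List.le_sum_of_mem (by simpa using ha)
      omega
    rw [h0 l hz]
    have : l.map (· + 1) = List.replicate (l.map (· + 1)).length 1 := by
      apply List.eq_replicate_of_mem
      intro y hy
      obtain ⟨a, ha, rfl⟩ := List.mem_map.mp hy
      simp [hz a ha]
    rw [this]
    simp
  | succ n ih =>
    intro l hsum hsort
    by_cases hz : ∀ a ∈ l, a = 0
    · rw [h0 l hz]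
      have : l.map (· + 1) = List.replicate (l.map (· + 1)).length 1 := by
        apply List.eq_replicate_of_mem
        intro y hy
        obtain ⟨a, ha, rfl⟩ := List.mem_map.mp hy
        simp [hz a ha]
      rw [this]
      simp
    · -- l nonempty, last element ≥ 1
      rcases List.eq_nil_or_concat l with rfl | ⟨l', c, hlc⟩
      · simp at hz
      rw [List.concat_eq_append] at hlc
      subst hlc
      have hsplit := List.pairwise_append.mp hsort
      have hle' : ∀ x ∈ l', x ≤ c := fun x hx => hsplit.2.2 x hx c (by simp)
      have hc : c ≠ 0 := by
        intro rfl'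
        apply hz
        intro a ha
        rcases List.mem_append.mp ha with h | h
        · have := hle' a h; omega
        · simp at h; omega
      obtain ⟨b, rfl⟩ := Nat.exists_eq_succ_of_ne_zero hc
      obtain ⟨l₁, k, rfl, hl₁b, hl₁s⟩ := sdb_decomp l' b hsplit.1 hle'
      -- use hrec
      have step := hrec (l₁ ++ List.replicate k (b+1)) b
      -- swap to sorted form
      have hswapped := sdb_swapmany d hswap k l₁ b []
      have hmsorted : (l₁ ++ b :: List.replicate k (b+1) ++ []).Pairwise (· ≤ ·) := by
        rw [List.append_nil, List.pairwise_append]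
        refine ⟨hl₁s, ?_, ?_⟩
        · rw [List.pairwise_cons]
          constructor
          · intro y hy
            have := List.eq_of_mem_replicate hy
            omega
          · exact sdb_rep (b + 1) k
        · intro x hx y hy
          have hx' := hl₁b x hx
          rcases List.mem_cons.mp hy with rfl | hy
          · omega
          · have := List.eq_of_mem_replicate hy; omega
      have hmsum : (l₁ ++ b :: List.replicate k (b+1) ++ []).sum ≤ n := by
        simp only [List.append_nil, List.sum_append, List.sum_cons, List.sum_replicate,
          smul_eq_mul] at hsum ⊢
        simp [List.sum_append, List.sum_replicate] at hsum
        omega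
      have hm := ih _ hmsum hmsorted
      have hprodeq : ((l₁ ++ b :: List.replicate k (b+1) ++ []).map (· + 1)).prod =
          ((l₁ ++ List.replicate k (b+1)).map (· + 1)).prod * (b + 1) := by
        simp [List.map_append, List.prod_append, List.map_replicate, List.prod_replicate,
          mul_comm, mul_assoc, mul_left_comm]
      have hbound : d ((l₁ ++ List.replicate k (b+1)) ++ [b]) ≤
          ((l₁ ++ List.replicate k (b+1)).map (· + 1)).prod * (b + 1) := by
        have : (l₁ ++ List.replicate k (b+1)) ++ [b] =
            l₁ ++ List.replicate k (b+1) ++ b :: [] := by simp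
        rw [this, hswapped, ← hprodeq]
        exact hm
      calc d ((l₁ ++ List.replicate k (b+1)) ++ [b + 1])
          ≤ d ((l₁ ++ List.replicate k (b+1)) ++ [b]) +
            ((l₁ ++ List.replicate k (b+1)).map (· + 1)).prod := step
        _ ≤ ((l₁ ++ List.replicate k (b+1)).map (· + 1)).prod * (b + 1) +
            ((l₁ ++ List.replicate k (b+1)).map (· + 1)).prod := by
            exact Nat.add_le_add_right hbound _
        _ = (((l₁ ++ List.replicate k (b+1)) ++ [b + 1]).map (· + 1)).prod := by
            simp [List.map_append, List.prod_append]
            ring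
end

section
/- In ℂ[e₀,...,e_{n−1}], let the generating function e(z) = Σ_{i=0}^{n−1} eᵢ z^{n−1−i}. For A = (a₁,...,aₙ) ∈ ℕⁿ let I_A be the ideal generated by the coefficients of z^s in e(z)^k for all k ≥ 1 and s < N_A(k) = Σⱼ(k+1−aⱼ)₊. If A' = (a₁,...,aᵢ−1,...,aⱼ+1,...,aₙ) with i < j and a₁ ≤ ... ≤ aₙ, then I_{A'} ⊇ I_A, i.e., there is a surjection ℂ[e₀,...,e_{n−1}]/I_A → ℂ[e₀,...,e_{n−1}]/I_{A'}. -/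
open Finset

/-- The generating function `e(z) = Σ_{i<n} eᵢ z^{n−1−i}` with `eᵢ` the variables of
ℂ[e₀,…,e_{n−1}]. -/
noncomputable def genE (n : ℕ) : Polynomial (MvPolynomial (Fin n) ℂ) :=
  ∑ i : Fin n, Polynomial.C (MvPolynomial.X i) * Polynomial.X ^ (n - 1 - (i : ℕ))

/-- The ideal `I_A` generated by the coefficients of `z^s` in `e(z)^k`,
`k ≥ 1`, `s < N_A(k) = Σⱼ (k+1−aⱼ)₊`. -/
noncomputable def fusionIdeal (n : ℕ) (a : Fin n → ℕ) : Ideal (MvPolynomial (Fin n) ℂ) :=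
  Ideal.span {p | ∃ k, 1 ≤ k ∧ ∃ s, s < (∑ j, (k + 1 - a j)) ∧ p = ((genE n) ^ k).coeff s}

lemma key_sum_le (n k : ℕ) (a : Fin n → ℕ) (hpos : ∀ m, 0 < a m) (hmono : Monotone a)
    (i j : Fin n) (hij : i < j) :
    ∑ m, (k + 1 - a m) ≤
      ∑ m, (k + 1 - (Function.update (Function.update a i (a i - 1)) j (a j + 1)) m) := by
  have hne : i ≠ j := ne_of_lt hij
  have hj : j ∈ (univ : Finset (Fin n)) := mem_univ j
  have hi : i ∈ (univ : Finset (Fin n)).erase j := by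
    simp [hne]
  rw [← Finset.add_sum_erase _ _ hj, ← Finset.add_sum_erase _ _ hi,
    ← Finset.add_sum_erase _ (fun m => k + 1 - (Function.update (Function.update a i (a i - 1)) j (a j + 1)) m) hj,
    ← Finset.add_sum_erase _ _ hi]
  have hsum : ∑ m ∈ (univ.erase j).erase i, (k + 1 - a m) =
      ∑ m ∈ (univ.erase j).erase i,
        (k + 1 - (Function.update (Function.update a i (a i - 1)) j (a j + 1)) m) := by
    refine Finset.sum_congr rfl fun m hm => ?_
    simp only [mem_erase] at hm
    rw [Function.update_of_ne hm.2.1, Function.update_of_ne hm.1]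
  rw [← hsum]
  have h1 : (Function.update (Function.update a i (a i - 1)) j (a j + 1)) j = a j + 1 := by
    simp
  have h2 : (Function.update (Function.update a i (a i - 1)) j (a j + 1)) i = a i - 1 := by
    rw [Function.update_of_ne hne, Function.update_self]
  rw [h1, h2]
  have hle : a i ≤ a j := hmono hij.le
  have hp : 0 < a i := hpos i
  omega

/-- If `A` is nondecreasing with positive entries and `A'` is obtained from `A` by
`aᵢ ↦ aᵢ − 1`, `aⱼ ↦ aⱼ + 1` (`i < j`), then `I_A ⊆ I_{A'}`, i.e. there is a surjection
`ℂ[e₀,…,e_{n−1}]/I_A → ℂ[e₀,…,e_{n−1}]/I_{A'}`. -/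
theorem fusionIdeal_mono (n : ℕ) (a : Fin n → ℕ) (hpos : ∀ m, 0 < a m)
    (hmono : Monotone a) (i j : Fin n) (hij : i < j) :
    fusionIdeal n a ≤
      fusionIdeal n (Function.update (Function.update a i (a i - 1)) j (a j + 1)) := by
  apply Ideal.span_mono
  rintro p ⟨k, hk, s, hs, rfl⟩
  exact ⟨k, hk, s, lt_of_lt_of_le hs (key_sum_le n k a hpos hmono i j hij), rfl⟩
end
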